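/- Let 𝒳 and 𝒴 be finite sets, let P_{XY} be a probability distribution on 𝒳 × 𝒴, and for each (x,y) with P_{XY}(x,y) > 0 let ρ_E^{x,y} be a density matrix on ℂ^d. Define ρ_{YE}^x := Σ_y P_{Y|X}(y|x) · |y⟩⟨y| ⊗ ρ_E^{x,y} on ℂ^{|𝒴|} ⊗ ℂ^d, and let ρ_E := Σ_{x,y} P_{XY}(x,y) · ρ_E^{x,y}. Then p_guess(X|YE) ≤ rank(ρ_E) · p_guess(X|Y), where p_guess(X|YE) := sup over POVMs {M_x}_{x∈𝒳} on ℂ^{|𝒴|} ⊗ ℂ^d of Σ_x P_X(x)·tr(M_x ρ_{YE}^x) and p_guess(X|Y) := Σ_y P_Y(y) · max_x P_{X|Y}(x|y). Equivalently, in entropy form, H_min(X|YE) ≥ H_min(X|Y) − H_max(E), where H_min denotes minus the base-2 logarithm of the corresponding guessing probability and H_max(E) := log₂ rank(ρ_E). -/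

import Mathlib

/-!
Let `Π` be the support projection of `σ = ρ_E = ∑ₓ,ᵧ P(x,y) ρ^{x,y}`, so that `tr Π = rank σ`.
Each `ρ^{x,y}` with `P(x,y) > 0` satisfies `P(x,y) ρ^{x,y} ≤ σ` and `ρ^{x,y} ≤ 1`, hence
`ρ^{x,y} ≤ Π`. The diagonal blocks `M_x^y = ⟨y|M_x|y⟩` of a POVM form a POVM on `ℂ^d`, so
`∑ₓ P(x,y) tr(M_x^y ρ^{x,y}) ≤ (maxₓ P(x,y)) ∑ₓ tr(M_x^y Π) = (maxₓ P(x,y)) rank σ`;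
summing over `y` gives the bound, since `∑ᵧ maxₓ P(x,y) = p_guess(X|Y)`.
-/

open scoped ComplexOrder Kronecker

/-- The cq-state `ρ_{YE}^x = ∑_y P_{Y|X}(y|x) |y⟩⟨y| ⊗ ρ_E^{x,y}` on `ℂ^|𝒴| ⊗ ℂ^d`. -/
noncomputable def rhoYE {𝒳 𝒴 : Type*} [Fintype 𝒳] [Fintype 𝒴] [DecidableEq 𝒴] {d : ℕ}
    (P : 𝒳 → 𝒴 → ℝ) (ρ : 𝒳 → 𝒴 → Matrix (Fin d) (Fin d) ℂ) (x : 𝒳) :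
    Matrix (𝒴 × Fin d) (𝒴 × Fin d) ℂ :=
  ∑ y, ((P x y / ∑ y', P x y' : ℝ) : ℂ) • (Matrix.single y y (1 : ℂ) ⊗ₖ ρ x y)

open scoped MatrixOrder

namespace Matrix

variable {𝕜 n : Type*} [RCLike 𝕜] [Fintype n] [DecidableEq n]

lemma continuousOn_spectrum (A : Matrix n n 𝕜) (f : ℝ → ℝ) : ContinuousOn f (spectrum ℝ A) :=
  A.finite_real_spectrum.continuousOn f

/-- For Hermitian `A`, the orthogonal projection onto the range of `A` (junk `0` otherwise). -/
noncomputable def supportProj (A : Matrix n n 𝕜) : Matrix n n 𝕜 :=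
  cfc (fun t : ℝ => if t = 0 then 0 else 1) A

lemma isStarProjection_supportProj (A : Matrix n n 𝕜) : IsStarProjection A.supportProj := by
  refine ⟨?_, cfc_predicate _ A⟩
  rw [IsIdempotentElem, supportProj,
    ← cfc_mul (hf := A.continuousOn_spectrum _) (hg := A.continuousOn_spectrum _)]
  congr 1
  ext t
  split_ifs <;> simp

lemma mul_supportProj {A : Matrix n n 𝕜} (hA : A.IsHermitian) : A * A.supportProj = A := by
  conv_lhs => enter [1]; rw [← cfc_id' ℝ A]
  rw [supportProj, ← cfc_mul (hf := A.continuousOn_spectrum _) (hg := A.continuousOn_spectrum _)]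
  conv_rhs => rw [← cfc_id' ℝ A]
  congr 1
  ext t
  split_ifs with h <;> simp [h]

lemma IsHermitian.trace_cfc {A : Matrix n n 𝕜} (hA : A.IsHermitian) (f : ℝ → ℝ) :
    (cfc f A).trace = ∑ i, (f (hA.eigenvalues i) : 𝕜) := by
  rw [hA.cfc_eq, IsHermitian.cfc, Unitary.conjStarAlgAut_apply, trace_mul_cycle,
    Unitary.coe_star_mul_self, one_mul, trace_diagonal]
  rfl

lemma trace_supportProj {A : Matrix n n 𝕜} (hA : A.IsHermitian) :
    A.supportProj.trace = A.rank := by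
  rw [supportProj, hA.trace_cfc, hA.rank_eq_card_non_zero_eigs, Fintype.card_subtype]
  simp [Finset.sum_ite]

lemma PosSemidef.le_one_of_trace_eq_one {B : Matrix n n 𝕜} (hB : B.PosSemidef)
    (h : B.trace = 1) : B ≤ 1 := by
  refine CFC.le_one (R := ℝ) (fun x hx => ?_) hB.isHermitian.isSelfAdjoint
  rw [hB.isHermitian.spectrum_real_eq_range_eigenvalues] at hx
  obtain ⟨i, rfl⟩ := hx
  have hsum : ∑ j, hB.isHermitian.eigenvalues j = 1 := by
    have := hB.isHermitian.trace_eq_sum_eigenvalues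
    rw [h] at this
    exact_mod_cast this.symm
  exact hsum ▸ Finset.single_le_sum (fun j _ => hB.eigenvalues_nonneg j) (Finset.mem_univ i)

lemma mul_eq_zero_of_star_mul_mul_eq_zero {B Q : Matrix n n 𝕜} (hB : 0 ≤ B)
    (h : star Q * B * Q = 0) : B * Q = 0 := by
  obtain ⟨C, rfl⟩ := CStarAlgebra.nonneg_iff_eq_star_mul_self.mp hB
  have hCQ : C * Q = 0 := by
    rw [← conjTranspose_mul_self_eq_zero, ← star_eq_conjTranspose, star_mul, ← h]
    noncomm_ring
  rw [mul_assoc, hCQ, mul_zero]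

lemma le_supportProj_of_smul_le {A B : Matrix n n 𝕜} (hA : A.IsHermitian) (hB : 0 ≤ B)
    (hB1 : B ≤ 1) {c : ℝ} (hc : 0 < c) (hBA : c • B ≤ A) : B ≤ A.supportProj := by
  have hp := isStarProjection_supportProj A
  set p := A.supportProj
  have hq : IsSelfAdjoint (1 - p) := hp.one_sub.isSelfAdjoint
  have hAq : A * (1 - p) = 0 := by rw [mul_sub, mul_one, mul_supportProj hA, sub_self]
  -- `B` vanishes on the kernel of `A`, because `0 ≤ c • B ≤ A` there.
  have hqBq : star (1 - p) * B * (1 - p) = 0 := by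
    refine le_antisymm ?_ (star_left_conjugate_nonneg hB _)
    have hc_qBq : c • (star (1 - p) * B * (1 - p)) ≤ 0 :=
      calc c • (star (1 - p) * B * (1 - p)) = (1 - p) * (c • B) * (1 - p) := by
            rw [hq.star_eq, mul_smul_comm, smul_mul_assoc]
        _ ≤ (1 - p) * A * (1 - p) := hq.conjugate_le_conjugate hBA
        _ = 0 := by rw [mul_assoc, hAq, mul_zero]
    simpa [smul_smul, hc.ne'] using smul_le_smul_of_nonneg_left hc_qBq (inv_nonneg.mpr hc.le)
  have hBp : B * p = B := by
    have hBq := mul_eq_zero_of_star_mul_mul_eq_zero hB hqBq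
    rwa [mul_sub, mul_one, sub_eq_zero, eq_comm] at hBq
  have hpB : p * B = B := by
    simpa [hp.isSelfAdjoint.star_eq, (IsSelfAdjoint.of_nonneg hB).star_eq] using congrArg star hBp
  calc B = p * B * p := by rw [hpB, hBp]
    _ ≤ p * 1 * p := hp.isSelfAdjoint.conjugate_le_conjugate hB1
    _ = p := by rw [mul_one, hp.isIdempotentElem.eq]

lemma trace_mul_nonneg {A B : Matrix n n 𝕜} (hA : 0 ≤ A) (hB : 0 ≤ B) : 0 ≤ (A * B).trace := by
  obtain ⟨C, rfl⟩ := CStarAlgebra.nonneg_iff_eq_star_mul_self.mp hB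
  rw [← mul_assoc, trace_mul_cycle]
  exact (nonneg_iff_posSemidef.mp (star_right_conjugate_nonneg hA C)).trace_nonneg

lemma sum_re_trace_mul_le {ι : Type*} [Fintype ι] {N B : ι → Matrix n n 𝕜} {C : Matrix n n 𝕜}
    (hN : ∀ i, 0 ≤ N i) (hN1 : ∑ i, N i = 1) (hB : ∀ i, B i ≤ C) :
    ∑ i, RCLike.re (N i * B i).trace ≤ RCLike.re C.trace :=
  calc ∑ i, RCLike.re (N i * B i).trace ≤ ∑ i, RCLike.re (N i * C).trace :=
        Finset.sum_le_sum fun i _ => RCLike.re_le_re <| sub_nonneg.mp <| by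
          simpa only [mul_sub, trace_sub] using trace_mul_nonneg (hN i) (sub_nonneg.mpr (hB i))
    _ = RCLike.re C.trace := by
        rw [← map_sum, ← trace_sum, ← Finset.sum_mul, hN1, one_mul]

lemma smul_nonneg_of_pos_imp {w : ℝ} {A : Matrix n n 𝕜} (hw : 0 ≤ w) (hA : 0 < w → 0 ≤ A) :
    0 ≤ w • A := by
  rcases hw.eq_or_lt with h | h
  · simp [← h]
  · exact smul_nonneg hw (hA h)

section Mixture

variable {ι : Type*} [Fintype ι] {w : ι → ℝ} {ρ : ι → Matrix n n 𝕜}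

lemma sum_smul_nonneg (hw : ∀ i, 0 ≤ w i) (hρ : ∀ i, 0 < w i → (ρ i).PosSemidef) :
    0 ≤ ∑ i, w i • ρ i :=
  Finset.sum_nonneg fun i _ => smul_nonneg_of_pos_imp (hw i) fun h => (hρ i h).nonneg

lemma smul_le_smul_supportProj_sum_smul (hw : ∀ i, 0 ≤ w i)
    (hρ : ∀ i, 0 < w i → (ρ i).PosSemidef ∧ (ρ i).trace = 1) {i : ι} {c : ℝ} (hc : w i ≤ c) :
    w i • ρ i ≤ c • (∑ j, w j • ρ j).supportProj := by
  have hp := (isStarProjection_supportProj (∑ j, w j • ρ j)).nonneg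
  rcases (hw i).eq_or_lt with h | h
  · rw [← h, zero_smul]
    exact smul_nonneg ((hw i).trans hc) hp
  obtain ⟨hρi, htr⟩ := hρ i h
  have hσ := (nonneg_iff_posSemidef.mp (sum_smul_nonneg hw fun j hj => (hρ j hj).1)).isHermitian
  have hle : w i • ρ i ≤ ∑ j, w j • ρ j := Finset.single_le_sum
    (fun j _ => smul_nonneg_of_pos_imp (hw j) fun hj => (hρ j hj).1.nonneg) (Finset.mem_univ i)
  calc w i • ρ i ≤ w i • (∑ j, w j • ρ j).supportProj := smul_le_smul_of_nonneg_left
        (le_supportProj_of_smul_le hσ hρi.nonneg (hρi.le_one_of_trace_eq_one htr) h hle) h.le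
    _ ≤ c • (∑ j, w j • ρ j).supportProj := smul_le_smul_of_nonneg_right hc hp

end Mixture

end Matrix

lemma Matrix.trace_mul_single_kronecker {m n R : Type*} [Fintype m] [Fintype n] [DecidableEq m]
    [CommSemiring R] (M : Matrix (m × n) (m × n) R) (i : m) (B : Matrix n n R) :
    (M * (Matrix.single i i 1 ⊗ₖ B)).trace
      = (M.submatrix (fun k => (i, k)) (fun k => (i, k)) * B).trace := by
  simp [Matrix.trace, Matrix.mul_apply, Matrix.single_apply, Fintype.sum_prod_type, ite_and]

lemma Matrix.sum_submatrix_eq_one {ι m n R : Type*} [Fintype ι] [DecidableEq m] [DecidableEq n]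
    [AddCommMonoidWithOne R] {M : ι → Matrix (m × n) (m × n) R} (hM : ∑ i, M i = 1) (y : m) :
    ∑ i, (M i).submatrix (fun k => (y, k)) (fun k => (y, k)) = 1 := by
  rw [← Matrix.submatrix_one (fun k : n => (y, k)) fun k l => congrArg Prod.snd, ← hM]
  ext
  simp [Matrix.sum_apply]

lemma sum_mul_iSup_div_sum {ι : Type*} [Fintype ι] {f : ι → ℝ} (hf : ∀ i, 0 ≤ f i) :
    (∑ j, f j) * ⨆ i, f i / ∑ j, f j = ⨆ i, f i := by
  rw [Real.mul_iSup_of_nonneg (Finset.sum_nonneg fun j _ => hf j)]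
  exact iSup_congr fun i => mul_div_cancel_of_imp' fun h =>
    (Finset.sum_eq_zero_iff_of_nonneg fun j _ => hf j).mp h i (Finset.mem_univ i)

lemma sum_mul_re_trace_mul_rhoYE {𝒳 𝒴 : Type*} [Fintype 𝒳] [Fintype 𝒴] [DecidableEq 𝒴] {d : ℕ}
    {P : 𝒳 → 𝒴 → ℝ} (hP : ∀ x y, 0 ≤ P x y) (ρ : 𝒳 → 𝒴 → Matrix (Fin d) (Fin d) ℂ)
    (M : Matrix (𝒴 × Fin d) (𝒴 × Fin d) ℂ) (x : 𝒳) :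
    (∑ y, P x y) * (M * rhoYE P ρ x).trace.re
      = ∑ y, (M.submatrix (fun i => (y, i)) (fun i => (y, i)) * (P x y • ρ x y)).trace.re := by
  simp only [rhoYE, Matrix.trace_sum, Complex.re_sum, Finset.mul_sum, Matrix.mul_smul,
    Matrix.trace_smul, Matrix.trace_mul_single_kronecker, Complex.real_smul, smul_eq_mul,
    Complex.re_ofReal_mul, ← mul_assoc]
  refine Finset.sum_congr rfl fun y _ => ?_
  rw [mul_div_cancel_of_imp' fun h =>
    (Finset.sum_eq_zero_iff_of_nonneg fun y' _ => hP x y').mp h y (Finset.mem_univ y)]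

theorem stmt16_general {𝒳 𝒴 : Type*} [Fintype 𝒳] [Fintype 𝒴] [DecidableEq 𝒴] {d : ℕ}
    (P : 𝒳 → 𝒴 → ℝ) (hP : ∀ x y, 0 ≤ P x y)
    (ρ : 𝒳 → 𝒴 → Matrix (Fin d) (Fin d) ℂ)
    (hρ : ∀ x y, 0 < P x y → (ρ x y).PosSemidef ∧ (ρ x y).trace = 1) :
    sSup {r : ℝ | ∃ M : 𝒳 → Matrix (𝒴 × Fin d) (𝒴 × Fin d) ℂ,
        (∀ x, (M x).PosSemidef) ∧ (∑ x, M x = 1) ∧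
        r = ∑ x, (∑ y, P x y) * (Matrix.trace (M x * rhoYE P ρ x)).re}
    ≤ ((∑ x, ∑ y, ((P x y : ℝ) : ℂ) • ρ x y).rank : ℝ) *
        ∑ y, (∑ x', P x' y) * ⨆ x, P x y / ∑ x', P x' y := by
  have hmax (y : 𝒴) : (∑ x', P x' y) * ⨆ x, P x y / ∑ x', P x' y = ⨆ x, P x y :=
    sum_mul_iSup_div_sum fun x => hP x y
  simp_rw [Complex.coe_smul, hmax, ← Fintype.sum_prod_type' fun x y => P x y • ρ x y]
  set σ := ∑ p : 𝒳 × 𝒴, P p.1 p.2 • ρ p.1 p.2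
  have hσ : σ.IsHermitian := (Matrix.nonneg_iff_posSemidef.mp <|
    Matrix.sum_smul_nonneg (fun p : 𝒳 × 𝒴 => hP p.1 p.2) fun p hp => (hρ p.1 p.2 hp).1).isHermitian
  refine Real.sSup_le ?_ <| mul_nonneg (Nat.cast_nonneg _) <|
    Finset.sum_nonneg fun y _ => Real.iSup_nonneg fun x => hP x y
  rintro _ ⟨M, hM, hM1, rfl⟩
  calc ∑ x, (∑ y, P x y) * (M x * rhoYE P ρ x).trace.re
      = ∑ y, ∑ x, ((M x).submatrix (fun i => (y, i)) (fun i => (y, i)) *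
          (P x y • ρ x y)).trace.re := by
        simp_rw [sum_mul_re_trace_mul_rhoYE hP]
        exact Finset.sum_comm
    _ ≤ ∑ y, ((⨆ x, P x y) • σ.supportProj).trace.re :=
        Finset.sum_le_sum fun y _ => Matrix.sum_re_trace_mul_le
          (fun x => Matrix.nonneg_iff_posSemidef.mpr ((hM x).submatrix _))
          (Matrix.sum_submatrix_eq_one hM1 y) fun x =>
            Matrix.smul_le_smul_supportProj_sum_smul (i := (x, y)) (fun p : 𝒳 × 𝒴 => hP p.1 p.2)
              (fun p => hρ p.1 p.2) (le_ciSup (f := (P · y)) (Set.finite_range _).bddAbove x)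
    _ = (σ.rank : ℝ) * ∑ y, ⨆ x, P x y := by
        simp [Matrix.trace_smul, Matrix.trace_supportProj hσ, Finset.sum_mul, mul_comm]

/-- Chain-rule bound for the guessing probability:
`p_guess(X|YE) ≤ rank(ρ_E) · p_guess(X|Y)`, where
`p_guess(X|Y) = ∑_y P_Y(y)·max_x P_{X|Y}(x|y)` and
`ρ_E = ∑_{x,y} P(x,y)·ρ_E^{x,y}`. (Equivalently,
`H_min(X|YE) ≥ H_min(X|Y) − H_max(E)` with `H_max(E) = log₂ rank(ρ_E)`.) -/
theorem stmt16 {𝒳 𝒴 : Type*} [Fintype 𝒳] [Fintype 𝒴] [DecidableEq 𝒴] {d : ℕ}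
    (P : 𝒳 → 𝒴 → ℝ) (hP : ∀ x y, 0 ≤ P x y) (hsum : ∑ x, ∑ y, P x y = 1)
    (ρ : 𝒳 → 𝒴 → Matrix (Fin d) (Fin d) ℂ)
    (hρ : ∀ x y, 0 < P x y → (ρ x y).PosSemidef ∧ (ρ x y).trace = 1) :
    sSup {r : ℝ | ∃ M : 𝒳 → Matrix (𝒴 × Fin d) (𝒴 × Fin d) ℂ,
        (∀ x, (M x).PosSemidef) ∧ (∑ x, M x = 1) ∧
        r = ∑ x, (∑ y, P x y) * (Matrix.trace (M x * rhoYE P ρ x)).re}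
    ≤ ((∑ x, ∑ y, ((P x y : ℝ) : ℂ) • ρ x y).rank : ℝ) *
        ∑ y, (∑ x', P x' y) * ⨆ x, P x y / ∑ x', P x' y :=
  stmt16_general P hP ρ hρ
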